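/- arXiv:1509.04167 — 2 statements merged into one kernel-verified Lean document; each statement's English description precedes it below -/
import Mathlib

section
/- Let k ≥ 1 be an integer and m₁, m₂ ∈ ℕ with m₁ + m₂ ≤ k. Then (2m₁ + m₂)! ≤ ((2k)!)^{m₁/k} · ((2k−1)!)^{m₂/(2k)}, where the powers are real powers. Moreover, equality holds when k = 1. -/
/-!
With `n = 2m₁ + m₂` and `N = 2k`, raising both sides to the power `N` and using
`N! = N (N - 1)!` turns the claim into `n! ^ N * N ^ m₂ ≤ N! ^ n`. Write `N! ≥ n! (n + 1) ^ (N - n - 1) N`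
and `n! ≤ (n + 1) ^ (n - 1)`; what remains is a comparison of powers of `n + 1 ≤ N`, and the
exponents fit exactly because `m₂ ≤ N - n` and `m₂ ≤ n`.
-/

open Nat

theorem pow_mul_pow_le_pow_mul_pow {R : Type*} [CommSemiring R] [PartialOrder R]
    [IsOrderedRing R] {a b : R} {x y x' y' : ℕ} (ha : 1 ≤ a) (hab : a ≤ b) (hy : y ≤ y')
    (hxy : x + y ≤ x' + y') : a ^ x * b ^ y ≤ a ^ x' * b ^ y' := by
  have ha₀ : 0 ≤ a := zero_le_one.trans ha
  calc a ^ x * b ^ y ≤ a ^ (x' + (y' - y)) * b ^ y :=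
        mul_le_mul_of_nonneg_right (pow_le_pow_right₀ ha (by omega)) (pow_nonneg (ha₀.trans hab) _)
    _ = a ^ x' * (a ^ (y' - y) * b ^ y) := by ring
    _ ≤ a ^ x' * (b ^ (y' - y) * b ^ y) :=
        mul_le_mul_of_nonneg_left
          (mul_le_mul_of_nonneg_right (pow_le_pow_left₀ ha₀ hab _) (pow_nonneg (ha₀.trans hab) _))
          (pow_nonneg ha₀ _)
    _ = a ^ x' * b ^ y' := by rw [← pow_add, Nat.sub_add_cancel hy]

namespace Nat

theorem factorial_le_pow_pred (n : ℕ) : n ! ≤ n ^ (n - 1) := by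
  rcases n with _ | n
  · simp
  · simpa [factorial_mul_descFactorial] using
      (factorial_mul_descFactorial n.le_succ).symm.trans_le
        (Nat.mul_le_mul_left _ (descFactorial_le_pow (n + 1) n))

theorem factorial_pow_mul_pow_le_factorial_pow {n N m : ℕ} (hmn : m ≤ n) (hN : n + m ≤ N) :
    n ! ^ N * N ^ m ≤ N ! ^ n := by
  obtain rfl | ⟨d, rfl⟩ : N = n ∨ ∃ d, N = n + d + 1 := by
    rcases Nat.lt_or_ge n N with h | h
    exacts [Or.inr ⟨N - n - 1, by omega⟩, Or.inl (by omega)]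
  · obtain rfl : m = 0 := by omega
    simp
  have h_top : n ! * (n + 1) ^ d * (n + d + 1) ≤ (n + d + 1)! := by
    rw [factorial_succ (n + d), mul_comm _ (n + d + 1)]
    exact Nat.mul_le_mul_left _ factorial_mul_pow_le_factorial
  have h_exp : (n - 1) * (d + 1) + m ≤ d * n + n := by
    rcases n with _ | n
    · omega
    · simp only [Nat.add_sub_cancel]; nlinarith
  calc n ! ^ (n + d + 1) * (n + d + 1) ^ m
      = n ! ^ n * (n ! ^ (d + 1) * (n + d + 1) ^ m) := by
        rw [← mul_assoc, ← pow_add, ← add_assoc]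
    _ ≤ n ! ^ n * ((n + 1) ^ ((n - 1) * (d + 1)) * (n + d + 1) ^ m) := by
        rw [pow_mul]
        gcongr
        exact (factorial_le_pow_pred n).trans (Nat.pow_le_pow_left n.le_succ _)
    _ ≤ n ! ^ n * ((n + 1) ^ (d * n) * (n + d + 1) ^ n) :=
        Nat.mul_le_mul_left _ (pow_mul_pow_le_pow_mul_pow (by omega) (by omega) hmn h_exp)
    _ = (n ! * (n + 1) ^ d * (n + d + 1)) ^ n := by rw [mul_pow, mul_pow, ← pow_mul]; ring
    _ ≤ (n + d + 1)! ^ n := by gcongr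

theorem factorial_pow_le_factorial_pow_mul_factorial_pred_pow {a m N : ℕ}
    (h : a + 2 * m ≤ N) : (a + m)! ^ N ≤ N ! ^ a * (N - 1)! ^ m := by
  obtain rfl | hN := eq_or_ne N 0
  · obtain ⟨rfl, rfl⟩ : a = 0 ∧ m = 0 := by omega
    simp
  refine Nat.le_of_mul_le_mul_right ?_ (pow_pos (Nat.pos_of_ne_zero hN) m)
  calc (a + m)! ^ N * N ^ m ≤ N ! ^ (a + m) :=
        factorial_pow_mul_pow_le_factorial_pow (by omega) (by omega)
    _ = N ! ^ a * (N - 1)! ^ m * N ^ m := by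
        rw [← mul_factorial_pred hN, pow_add, mul_pow]; ring

end Nat

theorem Real.le_rpow_div_mul_rpow_div_of_pow_le {x A B : ℝ} {n a b : ℕ} (hx : 0 ≤ x)
    (hA : 0 ≤ A) (hB : 0 ≤ B) (hn : n ≠ 0) (h : x ^ n ≤ A ^ a * B ^ b) :
    x ≤ A ^ ((a : ℝ) / n) * B ^ ((b : ℝ) / n) := by
  have hn' : (n : ℝ) ≠ 0 := by exact_mod_cast hn
  rwa [← pow_le_pow_iff_left₀ hx (by positivity) hn, mul_pow, ← rpow_mul_natCast hA,
    ← rpow_mul_natCast hB, div_mul_cancel₀ _ hn', div_mul_cancel₀ _ hn', rpow_natCast,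
    rpow_natCast]

/-- Lemma 4.2 (factorial inequality) of Roos: for `k ≥ 1` and `m₁ + m₂ ≤ k`,
`(2m₁ + m₂)! ≤ ((2k)!)^{m₁/k} ((2k-1)!)^{m₂/(2k)}`, with equality when `k = 1`. -/
theorem factorial_rpow_inequality (k : ℕ) (hk : 1 ≤ k) (m₁ m₂ : ℕ)
    (h : m₁ + m₂ ≤ k) :
    ((2 * m₁ + m₂).factorial : ℝ) ≤
      (((2 * k).factorial : ℝ)) ^ ((m₁ : ℝ) / k) *
        (((2 * k - 1).factorial : ℝ)) ^ ((m₂ : ℝ) / (2 * k)) ∧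
    (k = 1 →
      ((2 * m₁ + m₂).factorial : ℝ) =
        (((2 * k).factorial : ℝ)) ^ ((m₁ : ℝ) / k) *
          (((2 * k - 1).factorial : ℝ)) ^ ((m₂ : ℝ) / (2 * k))) := by
  refine ⟨?_, ?_⟩
  · have key : ((2 * m₁ + m₂)! : ℝ) ^ (2 * k) ≤
        ((2 * k)! : ℝ) ^ (2 * m₁) * ((2 * k - 1)! : ℝ) ^ m₂ := by
      exact_mod_cast factorial_pow_le_factorial_pow_mul_factorial_pred_pow (by omega)
    convert Real.le_rpow_div_mul_rpow_div_of_pow_le (by positivity) (by positivity)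
      (by positivity) (by omega) key using 3
    · push_cast
      field_simp
    · push_cast
      rfl
  · rintro rfl
    obtain ⟨rfl, rfl⟩ | ⟨rfl, rfl⟩ | ⟨rfl, rfl⟩ :
        (m₁ = 0 ∧ m₂ = 0) ∨ (m₁ = 1 ∧ m₂ = 0) ∨ (m₁ = 0 ∧ m₂ = 1) := by omega
    all_goals norm_num [factorial]
end

section
/- Define g : ℝ → ℝ by g(x) = 2 Σ_{m=2}^∞ (m−1) x^{m−2}/m! (equivalently g(x) = 2e^x(e^{−x} − 1 + x)/x² for x ≠ 0 and g(0) = 1). Then for every x ∈ [0,∞): 1 ≤ g(x) ≤ e^x. Moreover g(2) ≤ 4.195. -/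
open scoped Classical BigOperators

noncomputable section

namespace PaperL1

variable {X : Type*} [AddCommMonoid X]

/-- Convolution of two summable functions on an additive commutative monoid:
`(f ⋆ g) x = Σ_{(y,z) : y + z = x} f y * g z`. -/
def conv (f g : X → ℝ) : X → ℝ :=
  fun x => ∑' p : {p : X × X // p.1 + p.2 = x}, f p.1.1 * g p.1.2

/-- The Dirac delta at a point: the unit of the convolution algebra is `delta 0`. -/
def delta (x₀ : X) : X → ℝ := fun x => if x = x₀ then 1 else 0

/-- Convolution powers, with `f^{*0} = δ₀`. -/
def convPow (f : X → ℝ) : ℕ → (X → ℝ)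
  | 0 => delta 0
  | n + 1 => conv f (convPow f n)

/-- The exponential in the convolution algebra: `exp f = Σ_m f^{*m}/m!`. -/
def convExp (f : X → ℝ) : X → ℝ :=
  fun x => ∑' m : ℕ, ((m.factorial : ℝ))⁻¹ * convPow f m x

/-- Convolution product over a finite (linearly ordered) index set; the empty
product is `δ₀`. -/
def convProd {ι : Type*} [LinearOrder ι] (s : Finset ι) (f : ι → X → ℝ) : X → ℝ :=
  (s.sort (· ≤ ·)).foldr (fun i acc => conv (f i) acc) (delta 0)

/-- The ℓ¹ norm: `‖f‖ = Σ_x |f x|`. -/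
def l1norm (f : X → ℝ) : ℝ := ∑' x, |f x|

/-- A probability mass function: nonnegative values summing to `1`. -/
def IsPmf (f : X → ℝ) : Prop := (∀ x, 0 ≤ f x) ∧ HasSum f 1

/-- The function `g(x) = 2 Σ_{m=2}^∞ (m-1) x^{m-2} / m!`. -/
def gfun (x : ℝ) : ℝ := ∑' m : ℕ, 2 * (m + 1) * x ^ m / ((m + 2).factorial : ℝ)

end PaperL1

open PaperL1

/-! For `x ≥ 0` the series of `g` is dominated termwise by that of `eˣ`, since
`2 (m + 1) / (m + 2)! ≤ 1 / m!`, and its constant term is `1`. Shifting indices in the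
exponential series sums it in closed form, `x² g(x) = 2 (x eˣ - eˣ + 1)`, so
`g(2) = (e² + 1) / 2`, and `e < 2.7182818286` gives the numerical bound. -/

open scoped Nat

theorem Real.hasSum_pow_div_factorial_exp (x : ℝ) :
    HasSum (fun n : ℕ => x ^ n / n !) (Real.exp x) := by
  rw [Real.exp_eq_exp_ℝ]
  exact NormedSpace.expSeries_div_hasSum_exp x

theorem Nat.two_mul_succ_mul_factorial_le (m : ℕ) : 2 * (m + 1) * m ! ≤ (m + 2)! := by
  rw [Nat.factorial_succ, Nat.factorial_succ, mul_assoc]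
  exact Nat.mul_le_mul_right _ (by omega)

namespace PaperL1

theorem gfun_term_le_pow_div_factorial (m : ℕ) {x : ℝ} (hx : 0 ≤ x) :
    2 * (m + 1) * x ^ m / ((m + 2)! : ℝ) ≤ x ^ m / m ! := by
  have hfac : (2 * (m + 1) * m ! : ℝ) ≤ (m + 2)! := by
    exact_mod_cast Nat.two_mul_succ_mul_factorial_le m
  rw [div_le_div_iff₀ (by positivity) (by positivity)]
  calc 2 * (m + 1) * x ^ m * m ! = x ^ m * (2 * (m + 1) * m !) := by ring
    _ ≤ x ^ m * (m + 2)! := by gcongr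

theorem hasSum_gfun (x : ℝ) :
    HasSum (fun m : ℕ => 2 * (m + 1) * x ^ m / ((m + 2)! : ℝ)) (gfun x) := by
  refine (Summable.of_norm_bounded (Real.summable_pow_div_factorial |x|) fun m => ?_).hasSum
  simpa [abs_mul, abs_div, abs_pow, abs_of_nonneg (by positivity : (0 : ℝ) ≤ m + 1)]
    using gfun_term_le_pow_div_factorial m (abs_nonneg x)

theorem one_le_gfun {x : ℝ} (hx : 0 ≤ x) : 1 ≤ gfun x := by
  simpa using le_hasSum (hasSum_gfun x) 0 fun m _ => by positivity

theorem gfun_le_exp {x : ℝ} (hx : 0 ≤ x) : gfun x ≤ Real.exp x :=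
  hasSum_le (fun m => gfun_term_le_pow_div_factorial m hx) (hasSum_gfun x)
    (Real.hasSum_pow_div_factorial_exp x)

theorem sq_mul_gfun (x : ℝ) : x ^ 2 * gfun x = 2 * (x * Real.exp x - Real.exp x + 1) := by
  have hexp := Real.hasSum_pow_div_factorial_exp x
  have h1 := (hasSum_nat_add_iff' 1).2 hexp
  have h2 := (hasSum_nat_add_iff' 2).2 hexp
  -- termwise, `(m + 1) xᵐ⁺² / (m + 2)! = x · xᵐ⁺¹ / (m + 1)! - xᵐ⁺² / (m + 2)!`
  refine ((hasSum_gfun x).mul_left (x ^ 2)).unique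
    ((((h1.mul_left x).sub h2).mul_left 2).congr_fun fun m => ?_) |>.trans ?_
  · simp only [Nat.factorial_succ]
    push_cast
    field_simp
    ring
  · simp only [Finset.sum_range_succ, Finset.sum_range_zero]
    norm_num
    ring

theorem gfun_two : gfun 2 = (Real.exp 2 + 1) / 2 := by
  linarith [sq_mul_gfun 2]

end PaperL1

/-- Properties (10) of the auxiliary function
`g(x) = 2 Σ_{m=2}^∞ (m-1) x^{m-2}/m!` of Roos: `1 ≤ g(x) ≤ e^x` for
`x ∈ [0,∞)`, and `g(2) ≤ 4.195`. -/
theorem gfun_bounds :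
    (∀ x : ℝ, 0 ≤ x → 1 ≤ gfun x ∧ gfun x ≤ Real.exp x) ∧ gfun 2 ≤ 4.195 := by
  refine ⟨fun x hx => ⟨one_le_gfun hx, gfun_le_exp hx⟩, ?_⟩
  have he : Real.exp 2 = Real.exp 1 ^ 2 := by rw [← Real.exp_nat_mul]; norm_num
  rw [gfun_two, he]
  nlinarith [Real.exp_one_lt_d9, Real.exp_pos 1]
end
end
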